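/- For the cycle graph C_n with n ≥ 3: vs_{χ'}(C_n) = 1 if n is odd, and vs_{χ'}(C_n) = ⌈n/3⌉ if n is even. -/

import Mathlib

open SimpleGraph

open scoped Classical ENNReal

/-- `H` is (isomorphic to) a subgraph of `G`. -/
def IsSubgraphOf {α β : Type} (H : SimpleGraph α) (G : SimpleGraph β) : Prop :=
  ∃ f : α ↪ β, ∀ u v : α, H.Adj u v → G.Adj (f u) (f v)

/-- The `ρ`-vertex stability number of `G`: the minimum number of vertices of `G`
whose removal results in a graph `H ⊆ G` with `ρ H ≠ ρ G` or with no edges. -/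
noncomputable def vsNum {V : Type} [Fintype V] [DecidableEq V]
    (ρ : ∀ (W : Type) [Fintype W] [DecidableEq W], SimpleGraph W → ℝ≥0∞)
    (G : SimpleGraph V) : ℕ :=
  sInf {n | ∃ S : Finset V, S.card = n ∧
    (ρ _ (G.induce (↑Sᶜ : Set V)) ≠ ρ _ G ∨ (G.induce (↑Sᶜ : Set V)).edgeSet = ∅)}

/-- `ρ` is monotone increasing: `H ⊆ G` implies `ρ H ≤ ρ G`. -/
def MonotoneIncrInv
    (ρ : ∀ (W : Type) [Fintype W] [DecidableEq W], SimpleGraph W → ℝ≥0∞) : Prop :=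
  ∀ (α β : Type) [Fintype α] [DecidableEq α] [Fintype β] [DecidableEq β]
    (H : SimpleGraph α) (G : SimpleGraph β), IsSubgraphOf H G → ρ _ H ≤ ρ _ G

/-- `ρ` is monotone decreasing: `H ⊆ G` implies `ρ H ≥ ρ G`. -/
def MonotoneDecrInv
    (ρ : ∀ (W : Type) [Fintype W] [DecidableEq W], SimpleGraph W → ℝ≥0∞) : Prop :=
  ∀ (α β : Type) [Fintype α] [DecidableEq α] [Fintype β] [DecidableEq β]
    (H : SimpleGraph α) (G : SimpleGraph β), IsSubgraphOf H G → ρ _ G ≤ ρ _ H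

/-- `ρ` is maxing: for disjoint graphs, `ρ (H₁ ∪ H₂) = max (ρ H₁) (ρ H₂)`. -/
def MaxingInv
    (ρ : ∀ (W : Type) [Fintype W] [DecidableEq W], SimpleGraph W → ℝ≥0∞) : Prop :=
  ∀ (α β : Type) [Fintype α] [DecidableEq α] [Fintype β] [DecidableEq β]
    (G : SimpleGraph α) (H : SimpleGraph β), ρ _ (G ⊕g H) = max (ρ _ G) (ρ _ H)

/-- The chromatic index: minimum number of colors in a proper edge coloring. -/
noncomputable def chromIndex {V : Type} (G : SimpleGraph V) : ℕ :=
  sInf {k | ∃ c : G.edgeSet → Fin k, ∀ e₁ e₂ : G.edgeSet, e₁ ≠ e₂ →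
    (∃ v, v ∈ (e₁ : Sym2 V) ∧ v ∈ (e₂ : Sym2 V)) → c e₁ ≠ c e₂}

/-- Maximum degree. -/
noncomputable def maxDeg {V : Type} [Fintype V] (G : SimpleGraph V) : ℕ :=
  Finset.univ.sup fun v => (G.neighborSet v).ncard

/-- Minimum degree. -/
noncomputable def minDeg {V : Type} [Fintype V] (G : SimpleGraph V) : ℕ :=
  sInf {d | ∃ v, (G.neighborSet v).ncard = d}

/-- The chromatic vertex stability number `vs_{χ'}(G)`. -/
noncomputable def vsChi {V : Type} [Fintype V] [DecidableEq V] (G : SimpleGraph V) : ℕ :=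
  if G.edgeSet = ∅ then 0 else
    sInf {n | ∃ S : Finset V, S.card = n ∧
      chromIndex (G.induce (↑Sᶜ : Set V)) ≠ chromIndex G}

/-- The `Δ`-vertex stability number `vs_Δ(G)`. -/
noncomputable def vsDelta {V : Type} [Fintype V] [DecidableEq V] (G : SimpleGraph V) : ℕ :=
  sInf {n | ∃ S : Finset V, S.card = n ∧
    (maxDeg (G.induce (↑Sᶜ : Set V)) ≠ maxDeg G ∨ (G.induce (↑Sᶜ : Set V)).edgeSet = ∅)}

/-- The `δ`-vertex stability number `vs_δ(G)`. -/
noncomputable def vsMinDeg {V : Type} [Fintype V] [DecidableEq V] (G : SimpleGraph V) : ℕ :=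
  sInf {n | ∃ S : Finset V, S.card = n ∧
    (minDeg (G.induce (↑Sᶜ : Set V)) ≠ minDeg G ∨ (G.induce (↑Sᶜ : Set V)).edgeSet = ∅)}

/-- `class G = χ'(G) - Δ(G) + 1 ∈ {1,2}`. -/
noncomputable def classInv {V : Type} [Fintype V] (G : SimpleGraph V) : ℕ :=
  chromIndex G - maxDeg G + 1

/-- The `class`-vertex stability number. -/
noncomputable def vsClass {V : Type} [Fintype V] [DecidableEq V] (G : SimpleGraph V) : ℕ :=
  sInf {n | ∃ S : Finset V, S.card = n ∧
    (classInv (G.induce (↑Sᶜ : Set V)) ≠ classInv G ∨ (G.induce (↑Sᶜ : Set V)).edgeSet = ∅)}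

/-- Number of connected components. -/
noncomputable def numComponents {V : Type} (G : SimpleGraph V) : ℕ :=
  Nat.card G.ConnectedComponent

/-- The `ω`-vertex stability number (ω = number of components). -/
noncomputable def vsOmega {V : Type} [Fintype V] [DecidableEq V] (G : SimpleGraph V) : ℕ :=
  sInf {n | ∃ S : Finset V, S.card = n ∧
    (numComponents (G.induce (↑Sᶜ : Set V)) ≠ numComponents G ∨
      (G.induce (↑Sᶜ : Set V)).edgeSet = ∅)}

/-- Vertex connectivity: minimum number of vertices whose removal yields a graph that is
not connected, or the single-vertex graph `K₁`. -/
noncomputable def kappa {V : Type} [Fintype V] [DecidableEq V] (G : SimpleGraph V) : ℕ :=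
  sInf {n | ∃ S : Finset V, S.card = n ∧
    (¬ (G.induce (↑Sᶜ : Set V)).Connected ∨ Fintype.card ↥(↑Sᶜ : Set V) = 1)}

/-- `γ(V_Δ)`: minimum size of a set `Γ` of vertices such that every vertex of maximum
degree has a neighbor in `Γ`. -/
noncomputable def gammaMaxDeg {V : Type} [Fintype V] [DecidableEq V] (G : SimpleGraph V) : ℕ :=
  sInf {n | ∃ Γ : Finset V, Γ.card = n ∧
    ∀ v : V, (G.neighborSet v).ncard = maxDeg G → ∃ u ∈ Γ, G.Adj u v}

/-- The wheel graph `W n`: cycle `C n` joined with one extra vertex. -/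
def wheelGraph (n : ℕ) : SimpleGraph (Option (Fin n)) :=
  SimpleGraph.fromRel (fun x y =>
    match x, y with
    | none, some _ => True
    | some i, some j => (j : ℕ) = ((i : ℕ) + 1) % n
    | _, _ => False)

namespace VsAux

/-! ### Generic facts about `chromIndex` -/

def Proper {V : Type} (G : SimpleGraph V) (k : ℕ) : Prop :=
  ∃ c : G.edgeSet → Fin k, ∀ e₁ e₂ : G.edgeSet, e₁ ≠ e₂ →
    (∃ v, v ∈ (e₁ : Sym2 V) ∧ v ∈ (e₂ : Sym2 V)) → c e₁ ≠ c e₂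

lemma chromIndex_def {V : Type} (G : SimpleGraph V) :
    chromIndex G = sInf {k | Proper G k} := rfl

lemma Proper.mono {V : Type} {G : SimpleGraph V} {k m : ℕ} (h : Proper G k) (hkm : k ≤ m) :
    Proper G m := by
  obtain ⟨c, hc⟩ := h
  exact ⟨fun e => Fin.castLE hkm (c e), fun e₁ e₂ hne hsh h =>
    hc e₁ e₂ hne hsh (Fin.castLE_injective hkm h)⟩

lemma proper_card {V : Type} [Fintype V] (G : SimpleGraph V) :
    Proper G (Fintype.card G.edgeSet) :=
  ⟨Fintype.equivFin G.edgeSet, fun _ _ hne _ h => hne ((Fintype.equivFin _).injective h)⟩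

lemma proper_chromIndex {V : Type} [Fintype V] (G : SimpleGraph V) :
    Proper G (chromIndex G) :=
  by have := Nat.sInf_mem (s := {k | Proper G k}) ⟨_, proper_card G⟩; exact this

lemma chromIndex_le {V : Type} {G : SimpleGraph V} {k : ℕ} (h : Proper G k) :
    chromIndex G ≤ k := Nat.sInf_le h

lemma two_le_chromIndex {V : Type} [Fintype V] {G : SimpleGraph V}
    (e₁ e₂ : G.edgeSet) (hne : e₁ ≠ e₂)
    (hsh : ∃ v, v ∈ (e₁ : Sym2 V) ∧ v ∈ (e₂ : Sym2 V)) : 2 ≤ chromIndex G := by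
  by_contra h
  push_neg at h
  obtain ⟨c, hc⟩ := (proper_chromIndex G).mono (show chromIndex G ≤ 1 by omega)
  exact hc e₁ e₂ hne hsh (Subsingleton.elim _ _)

lemma Proper.pullback {α β : Type} {H : SimpleGraph α} {G : SimpleGraph β} {k : ℕ}
    {f : α → β} (hinj : Function.Injective f)
    (hadj : ∀ u v, H.Adj u v → G.Adj (f u) (f v))
    (h : Proper G k) : Proper H k := by
  obtain ⟨c, hc⟩ := h
  have hmem : ∀ e : H.edgeSet, Sym2.map f (e : Sym2 α) ∈ G.edgeSet := by
    rintro ⟨e, he⟩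
    induction e using Sym2.ind with
    | _ a b => exact hadj a b he
  refine ⟨fun e => c ⟨Sym2.map f (e : Sym2 α), hmem e⟩, ?_⟩
  rintro e₁ e₂ hne ⟨v, hv₁, hv₂⟩ hcol
  refine hc ⟨_, hmem e₁⟩ ⟨_, hmem e₂⟩ ?_ ?_ hcol
  · simp only [ne_eq, Subtype.mk.injEq]
    exact fun h => hne (Subtype.ext (Sym2.map.injective hinj h))
  · exact ⟨f v, Sym2.mem_map.2 ⟨v, hv₁, rfl⟩, Sym2.mem_map.2 ⟨v, hv₂, rfl⟩⟩

lemma chromIndex_induce_le {V : Type} [Fintype V] (G : SimpleGraph V) (A : Set V) :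
    chromIndex (G.induce A) ≤ chromIndex G :=
  chromIndex_le ((proper_chromIndex G).pullback Subtype.val_injective (fun _ _ h => h))

lemma chromIndex_induce_univ {V : Type} [Fintype V] (G : SimpleGraph V) :
    chromIndex (G.induce (Set.univ : Set V)) = chromIndex G := by
  refine le_antisymm (chromIndex_induce_le G _) ?_
  refine chromIndex_le ((proper_chromIndex (G.induce (Set.univ : Set V))).pullback
    (f := fun v => (⟨v, trivial⟩ : (Set.univ : Set V))) ?_ ?_)
  · intro a b h
    exact congrArg Subtype.val h
  · intro u v h
    exact h

/-! ### Arithmetic in `Fin n` -/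

variable {n : ℕ} [NeZero n]

open Fin.NatCast

lemma val_one (hn : 3 ≤ n) : ((1 : Fin n) : ℕ) = 1 := by
  rw [Fin.val_one']; exact Nat.mod_eq_of_lt (by omega)

lemma val_two (hn : 3 ≤ n) : ((2 : Fin n) : ℕ) = 2 := by
  have : ((2 : ℕ) : Fin n) = (2 : Fin n) := by norm_cast
  rw [← this, Fin.val_natCast]; exact Nat.mod_eq_of_lt (by omega)

lemma val_add_one (hn : 3 ≤ n) (a : Fin n) : ((a + 1 : Fin n) : ℕ) = (a.val + 1) % n := by
  rw [Fin.add_def, val_one hn]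

lemma val_add_two (hn : 3 ≤ n) (a : Fin n) : ((a + 2 : Fin n) : ℕ) = (a.val + 2) % n := by
  rw [Fin.add_def, val_two hn]

lemma val_add_one_lt (hn : 3 ≤ n) {a : Fin n} (h : a.val + 1 < n) :
    ((a + 1 : Fin n) : ℕ) = a.val + 1 := by
  rw [val_add_one hn, Nat.mod_eq_of_lt h]

lemma val_add_one_last (hn : 3 ≤ n) {a : Fin n} (h : a.val = n - 1) :
    ((a + 1 : Fin n) : ℕ) = 0 := by
  rw [val_add_one hn]
  have : a.val + 1 = n := by omega
  rw [this, Nat.mod_self]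

lemma add_one_ne (hn : 3 ≤ n) (a : Fin n) : a + 1 ≠ a := by
  intro h
  have h1 : (1 : Fin n) = 0 := by
    have := congrArg (· - a) h
    simpa [add_sub_cancel_right] using this
  have := congrArg Fin.val h1
  rw [val_one hn] at this
  simp at this

lemma add_two_ne (hn : 3 ≤ n) (a : Fin n) : a + 2 ≠ a := by
  intro h
  have h1 : (2 : Fin n) = 0 := by
    have := congrArg (· - a) h
    simpa [add_sub_cancel_right] using this
  have := congrArg Fin.val h1
  rw [val_two hn] at this
  simp at this

/-! ### Edges of the cycle graph -/

lemma cyc_adj (hn : 3 ≤ n) {u v : Fin n} :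
    (cycleGraph n).Adj u v ↔ v = u + 1 ∨ u = v + 1 := by
  rw [cycleGraph_adj']
  constructor
  · rintro (h | h)
    · right
      have : u - v = 1 := by rw [Fin.ext_iff, val_one hn]; exact h
      rw [sub_eq_iff_eq_add] at this
      rw [this, add_comm]
    · left
      have : v - u = 1 := by rw [Fin.ext_iff, val_one hn]; exact h
      rw [sub_eq_iff_eq_add] at this
      rw [this, add_comm]
  · rintro (h | h)
    · right; rw [h, add_sub_cancel_left, val_one hn]
    · left; rw [h, add_sub_cancel_left, val_one hn]

lemma edge_mem (hn : 3 ≤ n) (a : Fin n) : s(a, a + 1) ∈ (cycleGraph n).edgeSet := by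
  rw [SimpleGraph.mem_edgeSet, cyc_adj hn]; left; rfl

lemma edges_ne (hn : 3 ≤ n) (a : Fin n) :
    (s(a, a + 1) : Sym2 (Fin n)) ≠ s(a + 1, a + 1 + 1) := by
  intro he
  rw [Sym2.eq_iff] at he
  rcases he with ⟨h, -⟩ | ⟨h, -⟩
  · exact add_one_ne hn a h.symm
  · rw [add_assoc, one_add_one_eq_two] at h
    exact add_two_ne hn a h.symm

/-- the "lower endpoint" of an edge of the cycle -/
noncomputable def lo (hn : 3 ≤ n) : Sym2 (Fin n) → Fin n :=
  Sym2.lift ⟨fun a b => if b = a + 1 then a else if a = b + 1 then b else 0, by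
    intro a b
    dsimp only
    by_cases h1 : b = a + 1 <;> by_cases h2 : a = b + 1
    · exfalso
      rw [h2, add_assoc, one_add_one_eq_two] at h1
      exact add_two_ne hn b h1.symm
    · rw [if_pos h1, if_neg h2, if_pos h1]
    · rw [if_neg h1, if_pos h2, if_pos h2]
    · rw [if_neg h1, if_neg h2, if_neg h2, if_neg h1]⟩

lemma lo_mk (hn : 3 ≤ n) (a : Fin n) : lo hn s(a, a + 1) = a := by
  simp [lo]

lemma edge_form (hn : 3 ≤ n) {e : Sym2 (Fin n)} (he : e ∈ (cycleGraph n).edgeSet) :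
    e = s(lo hn e, lo hn e + 1) := by
  induction e using Sym2.ind with
  | _ u v =>
    rw [SimpleGraph.mem_edgeSet, cyc_adj hn] at he
    rcases he with h | h
    · rw [h, lo_mk hn]
    · rw [h, Sym2.eq_swap, lo_mk hn]

lemma lo_adjacent (hn : 3 ≤ n) {e₁ e₂ : Sym2 (Fin n)}
    (h₁ : e₁ ∈ (cycleGraph n).edgeSet) (h₂ : e₂ ∈ (cycleGraph n).edgeSet)
    (hne : e₁ ≠ e₂) (hsh : ∃ v, v ∈ e₁ ∧ v ∈ e₂) :
    lo hn e₂ = lo hn e₁ + 1 ∨ lo hn e₁ = lo hn e₂ + 1 := by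
  obtain ⟨v, hv₁, hv₂⟩ := hsh
  rw [edge_form hn h₁] at hv₁ hne
  rw [edge_form hn h₂] at hv₂ hne
  rw [Sym2.mem_iff] at hv₁ hv₂
  rcases hv₁ with h1 | h1 <;> rcases hv₂ with h2 | h2
  · exfalso; apply hne; rw [← h1, h2]
  · right; rw [← h1, h2]
  · left; rw [← h2, h1]
  · exfalso
    have h3 : lo hn e₁ = lo hn e₂ := add_right_cancel (h1.symm.trans h2)
    apply hne; rw [h3]

/-! ### Proper colorings of induced subgraphs of the cycle -/

lemma map_val_mem {V : Type} {G : SimpleGraph V} {A : Set V} :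
    ∀ e : Sym2 A, e ∈ (G.induce A).edgeSet → Sym2.map Subtype.val e ∈ G.edgeSet := by
  intro e he
  induction e using Sym2.ind with
  | _ a b => exact he

lemma mem_of_map_val {V : Type} {A : Set V} {e : Sym2 A} {x : V}
    (hx : x ∈ Sym2.map Subtype.val e) : x ∈ A := by
  rw [Sym2.mem_map] at hx
  obtain ⟨y, _, rfl⟩ := hx
  exact y.2

lemma proper_induce (hn : 3 ≤ n) (A : Set (Fin n)) {k : ℕ} (χ : Fin n → Fin k)
    (hχ : ∀ a : Fin n, a ∈ A → a + 1 ∈ A → a + 2 ∈ A → χ a ≠ χ (a + 1)) :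
    Proper ((cycleGraph n).induce A) k := by
  refine ⟨fun e => χ (lo hn (Sym2.map Subtype.val (e : Sym2 A))), ?_⟩
  rintro ⟨e₁, he₁⟩ ⟨e₂, he₂⟩ hne ⟨v, hv₁, hv₂⟩ hcol
  simp only at hv₁ hv₂ hcol
  have h₁ := map_val_mem (G := cycleGraph n) e₁ he₁
  have h₂ := map_val_mem (G := cycleGraph n) e₂ he₂
  have hne' : Sym2.map Subtype.val e₁ ≠ Sym2.map Subtype.val e₂ := fun h =>
    hne (Subtype.ext (Sym2.map.injective Subtype.val_injective h))
  have hsh : ∃ w, w ∈ Sym2.map Subtype.val e₁ ∧ w ∈ Sym2.map Subtype.val e₂ :=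
    ⟨v.val, Sym2.mem_map.2 ⟨v, hv₁, rfl⟩, Sym2.mem_map.2 ⟨v, hv₂, rfl⟩⟩
  obtain ⟨a, hA, la⟩ : ∃ a, Sym2.map Subtype.val e₁ = s(a, a + 1) ∧
      lo hn (Sym2.map Subtype.val e₁) = a := ⟨_, edge_form hn h₁, rfl⟩
  obtain ⟨b, hB, lb⟩ : ∃ b, Sym2.map Subtype.val e₂ = s(b, b + 1) ∧
      lo hn (Sym2.map Subtype.val e₂) = b := ⟨_, edge_form hn h₂, rfl⟩
  rw [la, lb] at hcol
  have m1 : a ∈ A := mem_of_map_val (e := e₁) (by rw [hA]; exact Sym2.mem_mk_left _ _)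
  have m2 : a + 1 ∈ A := mem_of_map_val (e := e₁) (by rw [hA]; exact Sym2.mem_mk_right _ _)
  have m1' : b ∈ A := mem_of_map_val (e := e₂) (by rw [hB]; exact Sym2.mem_mk_left _ _)
  have m2' : b + 1 ∈ A := mem_of_map_val (e := e₂) (by rw [hB]; exact Sym2.mem_mk_right _ _)
  rcases lo_adjacent hn h₁ h₂ hne' hsh with h | h
  · rw [la, lb] at h
    have m3 : a + 2 ∈ A := by
      have := m2'
      rwa [h, add_assoc, one_add_one_eq_two] at this
    exact hχ a m1 m2 m3 (by rw [← h]; exact hcol)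
  · rw [la, lb] at h
    have m3 : b + 2 ∈ A := by
      have := m2
      rwa [h, add_assoc, one_add_one_eq_two] at this
    exact hχ b m1' m2' m3 (by rw [← h]; exact hcol.symm)

/-! ### The chromatic index of the cycle graph -/

lemma two_le_chromIndex_cycle (hn : 3 ≤ n) : 2 ≤ chromIndex (cycleGraph n) := by
  refine two_le_chromIndex ⟨s(0, 0 + 1), edge_mem hn 0⟩
    ⟨s(0 + 1, 0 + 1 + 1), edge_mem hn (0 + 1)⟩ ?_ ?_
  · intro h
    exact edges_ne hn 0 (congrArg Subtype.val h)
  · exact ⟨0 + 1, Sym2.mem_mk_right _ _, Sym2.mem_mk_left _ _⟩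

lemma chromIndex_cycle_even (hn : 3 ≤ n) (he : Even n) : chromIndex (cycleGraph n) = 2 := by
  refine le_antisymm ?_ (two_le_chromIndex_cycle hn)
  rw [← chromIndex_induce_univ]
  refine chromIndex_le (proper_induce hn Set.univ
    (fun a => (⟨if a.val = n - 1 then 1 else a.val % 2, by split <;> omega⟩ : Fin 2)) ?_)
  intro a _ _ _
  have h2 : n % 2 = 0 := Nat.even_iff.1 he
  simp only [ne_eq, Fin.mk.injEq]
  by_cases h : a.val = n - 1
  · rw [val_add_one_last hn h]
    have := a.isLt
    split_ifs <;> first | exact not_false | omega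
  · rw [val_add_one_lt hn (by have := a.isLt; omega)]
    have := a.isLt
    split_ifs <;> first | exact not_false | omega

lemma chromIndex_cycle_odd_le (hn : 3 ≤ n) : chromIndex (cycleGraph n) ≤ 3 := by
  rw [← chromIndex_induce_univ]
  refine chromIndex_le (proper_induce hn Set.univ
    (fun a => (⟨if a.val = n - 1 then 2 else a.val % 2, by split <;> omega⟩ : Fin 3)) ?_)
  intro a _ _ _
  simp only [ne_eq, Fin.mk.injEq]
  by_cases h : a.val = n - 1
  · rw [val_add_one_last hn h]
    have := a.isLt
    split_ifs <;> first | exact not_false | omega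
  · rw [val_add_one_lt hn (by have := a.isLt; omega)]
    have := a.isLt
    split_ifs <;> first | exact not_false | omega

lemma fin2_step (x y : Fin 2) (h : x ≠ y) : y = x + 1 := by
  revert h; revert x y; decide

lemma chromIndex_cycle_odd (hn : 3 ≤ n) (ho : Odd n) : chromIndex (cycleGraph n) = 3 := by
  refine le_antisymm (chromIndex_cycle_odd_le hn) ?_
  by_contra hlt
  push_neg at hlt
  obtain ⟨c, hc⟩ := (proper_chromIndex (cycleGraph n)).mono
    (show chromIndex (cycleGraph n) ≤ 2 by omega)
  have key : ∀ m : ℕ, c ⟨s(((m : ℕ) : Fin n), ((m : ℕ) : Fin n) + 1), edge_mem hn _⟩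
      = c ⟨s((0 : Fin n), (0 : Fin n) + 1), edge_mem hn 0⟩ + (m : Fin 2) := by
    intro m
    induction m with
    | zero =>
      have h0 : (((0 : ℕ) : Fin n)) = (0 : Fin n) := by norm_cast
      have : (⟨s(((0 : ℕ) : Fin n), ((0 : ℕ) : Fin n) + 1), edge_mem hn _⟩ :
          (cycleGraph n).edgeSet) = ⟨s((0 : Fin n), (0 : Fin n) + 1), edge_mem hn 0⟩ :=
        Subtype.ext (by rw [h0])
      rw [this]
      norm_num
    | succ m ih =>
      have hcast : (((m + 1 : ℕ)) : Fin n) = ((m : ℕ) : Fin n) + 1 := by push_cast; ring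
      have heq : (⟨s(((m + 1 : ℕ) : Fin n), ((m + 1 : ℕ) : Fin n) + 1), edge_mem hn _⟩ :
          (cycleGraph n).edgeSet)
          = ⟨s(((m : ℕ) : Fin n) + 1, ((m : ℕ) : Fin n) + 1 + 1), edge_mem hn _⟩ :=
        Subtype.ext (by rw [hcast])
      rw [heq]
      have hne : (⟨s(((m : ℕ) : Fin n), ((m : ℕ) : Fin n) + 1), edge_mem hn _⟩ :
          (cycleGraph n).edgeSet)
          ≠ ⟨s(((m : ℕ) : Fin n) + 1, ((m : ℕ) : Fin n) + 1 + 1), edge_mem hn _⟩ := by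
        intro h
        exact edges_ne hn _ (congrArg Subtype.val h)
      have hsh : ∃ v : Fin n, v ∈ (s(((m : ℕ) : Fin n), ((m : ℕ) : Fin n) + 1) : Sym2 (Fin n))
          ∧ v ∈ (s(((m : ℕ) : Fin n) + 1, ((m : ℕ) : Fin n) + 1 + 1) : Sym2 (Fin n)) :=
        ⟨((m : ℕ) : Fin n) + 1, Sym2.mem_mk_right _ _, Sym2.mem_mk_left _ _⟩
      have hstep := fin2_step _ _ (hc _ _ hne hsh)
      rw [hstep, ih, Nat.cast_add, Nat.cast_one, add_assoc]
  have hfin := key n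
  have hn0 : ((n : ℕ) : Fin n) = (0 : Fin n) := Fin.natCast_self n
  have heqn : (⟨s(((n : ℕ) : Fin n), ((n : ℕ) : Fin n) + 1), edge_mem hn _⟩ :
      (cycleGraph n).edgeSet) = ⟨s((0 : Fin n), (0 : Fin n) + 1), edge_mem hn 0⟩ :=
    Subtype.ext (by rw [hn0])
  rw [heqn] at hfin
  have : ((n : ℕ) : Fin 2) = 0 := by
    have := left_eq_add.1 hfin
    exact this
  rw [Fin.natCast_eq_zero] at this
  rw [Nat.odd_iff] at ho
  omega

/-! ### Counting -/

lemma count_mult3 (m : ℕ) :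
    ((Finset.range m).filter (fun i => i % 3 = 0)).card = (m + 2) / 3 := by
  induction m with
  | zero => simp
  | succ m ih =>
    rw [Finset.range_add_one, Finset.filter_insert]
    by_cases h : m % 3 = 0
    · rw [if_pos h, Finset.card_insert_of_notMem (by simp)]
      omega
    · rw [if_neg h]
      omega

lemma card_mult3 (hn : 3 ≤ n) :
    (Finset.univ.filter (fun v : Fin n => v.val % 3 = 0)).card = (n + 2) / 3 := by
  rw [Finset.card_filter]
  rw [Fin.sum_univ_eq_sum_range (fun i => if i % 3 = 0 then 1 else 0) n]
  rw [← Finset.card_filter]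
  exact count_mult3 n

lemma cover_card (hn : 3 ≤ n) (S : Finset (Fin n))
    (hcov : ∀ i : Fin n, ∃ v ∈ S, v = i ∨ v = i + 1 ∨ v = i + 2) :
    n ≤ 3 * S.card := by
  choose g hgS hg using hcov
  have himg : Finset.univ.image g ⊆ S := by
    intro v hv
    rw [Finset.mem_image] at hv
    obtain ⟨i, _, rfl⟩ := hv
    exact hgS i
  have hcard : (Finset.univ : Finset (Fin n)).card ≤ 3 * (Finset.univ.image g).card := by
    refine Finset.card_le_mul_card_image Finset.univ 3 ?_
    intro b _
    have hsub : (Finset.univ.filter (fun i => g i = b)) ⊆ {b, b - 1, b - 2} := by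
      intro i hi
      rw [Finset.mem_filter] at hi
      simp only [Finset.mem_insert, Finset.mem_singleton]
      rcases hg i with h | h | h <;> rw [hi.2] at h
      · exact Or.inl h.symm
      · exact Or.inr (Or.inl (eq_sub_of_add_eq h.symm))
      · exact Or.inr (Or.inr (eq_sub_of_add_eq h.symm))
    refine (Finset.card_le_card hsub).trans ?_
    refine (Finset.card_insert_le _ _).trans ?_
    refine Nat.succ_le_succ ?_
    refine (Finset.card_insert_le _ _).trans ?_
    simp
  have h1 : (Finset.univ : Finset (Fin n)).card = n := by simp
  have h2 := Finset.card_le_card himg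
  omega

end VsAux

open VsAux Fin.NatCast in
/-- for `n ≥ 3`, `vs_{χ'}(C_n) = 1` if `n` is odd and `⌈n/3⌉` if `n` is even. -/
theorem vs_cycleGraph (n : ℕ) (hn : 3 ≤ n) :
    (Odd n → vsChi (cycleGraph n) = 1) ∧
      (Even n → vsChi (cycleGraph n) = (n + 2) / 3) := by
  haveI : NeZero n := ⟨by omega⟩
  have hEdge : (cycleGraph n).edgeSet ≠ ∅ := by
    intro h
    have := edge_mem (n := n) hn 0
    rw [h] at this
    exact this
  constructor
  · -- odd case
    intro hodd
    have hG3 := chromIndex_cycle_odd hn hodd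
    simp only [vsChi, if_neg hEdge]
    have h1 : 1 ∈ {m | ∃ S : Finset (Fin n), S.card = m ∧
        chromIndex ((cycleGraph n).induce (↑Sᶜ : Set (Fin n))) ≠ chromIndex (cycleGraph n)} := by
      refine ⟨{0}, Finset.card_singleton 0, ?_⟩
      rw [hG3]
      have hle : chromIndex ((cycleGraph n).induce (↑({0} : Finset (Fin n))ᶜ : Set (Fin n))) ≤ 2 := by
        refine chromIndex_le (proper_induce hn _
          (fun a => (⟨a.val % 2, by omega⟩ : Fin 2)) ?_)
        intro a _ hA1 _
        have ha1 : a + 1 ≠ 0 := by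
          intro h
          rw [h] at hA1
          simp at hA1
        have hval : a.val ≠ n - 1 := by
          intro h
          apply ha1
          rw [Fin.ext_iff, val_add_one_last hn h]
          rfl
        rw [ne_eq, Fin.mk.injEq, val_add_one_lt hn (by have := a.isLt; omega)]
        omega
      omega
    have h0 : 0 ∉ {m | ∃ S : Finset (Fin n), S.card = m ∧
        chromIndex ((cycleGraph n).induce (↑Sᶜ : Set (Fin n))) ≠ chromIndex (cycleGraph n)} := by
      rintro ⟨S, hcard, hne⟩
      rw [Finset.card_eq_zero] at hcard
      subst hcard
      apply hne
      have huniv : (↑((∅ : Finset (Fin n))ᶜ) : Set (Fin n)) = Set.univ := by simp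
      rw [huniv, chromIndex_induce_univ]
    have hle := Nat.sInf_le h1
    have hmem := Nat.sInf_mem (⟨1, h1⟩ : Set.Nonempty {m | ∃ S : Finset (Fin n), S.card = m ∧
        chromIndex ((cycleGraph n).induce (↑Sᶜ : Set (Fin n))) ≠ chromIndex (cycleGraph n)})
    have hne0 : sInf {m | ∃ S : Finset (Fin n), S.card = m ∧
        chromIndex ((cycleGraph n).induce (↑Sᶜ : Set (Fin n))) ≠ chromIndex (cycleGraph n)} ≠ 0 := by
      intro h
      rw [h] at hmem
      exact h0 hmem
    omega
  · -- even case
    intro heven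
    have hG2 := chromIndex_cycle_even hn heven
    simp only [vsChi, if_neg hEdge]
    have hmem3 : (n + 2) / 3 ∈ {m | ∃ S : Finset (Fin n), S.card = m ∧
        chromIndex ((cycleGraph n).induce (↑Sᶜ : Set (Fin n))) ≠ chromIndex (cycleGraph n)} := by
      refine ⟨Finset.univ.filter (fun v : Fin n => v.val % 3 = 0), card_mult3 hn, ?_⟩
      rw [hG2]
      have hle : chromIndex ((cycleGraph n).induce
          (↑(Finset.univ.filter (fun v : Fin n => v.val % 3 = 0))ᶜ : Set (Fin n))) ≤ 1 := by
        refine chromIndex_le (proper_induce hn _ (fun _ => (0 : Fin 1)) ?_)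
        intro a hA hA1 hA2
        exfalso
        have hmem : ∀ x : Fin n,
            x ∈ (↑(Finset.univ.filter (fun v : Fin n => v.val % 3 = 0))ᶜ : Set (Fin n)) →
            x.val % 3 ≠ 0 := by
          intro x hx
          simp only [Finset.coe_compl, Set.mem_compl_iff, Finset.mem_coe,
            Finset.mem_filter, Finset.mem_univ, true_and] at hx
          exact hx
        have h0 := hmem a hA
        have h1 := hmem _ hA1
        have h2 := hmem _ hA2
        rw [val_add_one hn] at h1
        rw [val_add_two hn] at h2
        have := a.isLt
        rcases Nat.lt_or_ge (a.val + 2) n with hlt | hge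
        · rw [Nat.mod_eq_of_lt (show a.val + 1 < n by omega)] at h1
          rw [Nat.mod_eq_of_lt hlt] at h2
          omega
        · rcases Nat.lt_or_ge (a.val + 1) n with hlt' | hge'
          · have : a.val + 2 = n := by omega
            rw [this, Nat.mod_self] at h2
            omega
          · have : a.val + 1 = n := by omega
            rw [this, Nat.mod_self] at h1
            omega
      omega
    have hlb : ∀ m ∈ {m | ∃ S : Finset (Fin n), S.card = m ∧
        chromIndex ((cycleGraph n).induce (↑Sᶜ : Set (Fin n))) ≠ chromIndex (cycleGraph n)},
        (n + 2) / 3 ≤ m := by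
      rintro m ⟨S, hcard, hne⟩
      have hcov : ∀ i : Fin n, ∃ v ∈ S, v = i ∨ v = i + 1 ∨ v = i + 2 := by
        by_contra hc
        push_neg at hc
        obtain ⟨i, hi⟩ := hc
        have hmemA : ∀ x : Fin n, (x = i ∨ x = i + 1 ∨ x = i + 2) →
            x ∈ (↑Sᶜ : Set (Fin n)) := by
          intro x hx
          simp only [Finset.coe_compl, Set.mem_compl_iff, Finset.mem_coe]
          intro hxS
          rcases hx with h | h | h
          exacts [(hi x hxS).1 h, (hi x hxS).2.1 h, (hi x hxS).2.2 h]
        have hA0 : i ∈ (↑Sᶜ : Set (Fin n)) := hmemA i (Or.inl rfl)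
        have hA1 : i + 1 ∈ (↑Sᶜ : Set (Fin n)) := hmemA _ (Or.inr (Or.inl rfl))
        have hA2 : i + 2 ∈ (↑Sᶜ : Set (Fin n)) := hmemA _ (Or.inr (Or.inr rfl))
        have hadj1 : ((cycleGraph n).induce (↑Sᶜ : Set (Fin n))).Adj ⟨i, hA0⟩ ⟨i + 1, hA1⟩ := by
          show (cycleGraph n).Adj i (i + 1)
          rw [cyc_adj hn]; left; rfl
        have hadj2 : ((cycleGraph n).induce (↑Sᶜ : Set (Fin n))).Adj ⟨i + 1, hA1⟩ ⟨i + 2, hA2⟩ := by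
          show (cycleGraph n).Adj (i + 1) (i + 2)
          rw [cyc_adj hn]; left
          rw [add_assoc, one_add_one_eq_two]
        have h2le : 2 ≤ chromIndex ((cycleGraph n).induce (↑Sᶜ : Set (Fin n))) := by
          refine two_le_chromIndex
            ⟨s(⟨i, hA0⟩, ⟨i + 1, hA1⟩), (SimpleGraph.mem_edgeSet _).2 hadj1⟩
            ⟨s(⟨i + 1, hA1⟩, ⟨i + 2, hA2⟩), (SimpleGraph.mem_edgeSet _).2 hadj2⟩ ?_ ?_
          · intro h
            have h' := congrArg (Sym2.map Subtype.val) (congrArg Subtype.val h)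
            simp only [Sym2.map_pair_eq] at h'
            apply edges_ne hn i
            rwa [add_assoc, one_add_one_eq_two]
          · exact ⟨⟨i + 1, hA1⟩, Sym2.mem_mk_right _ _, Sym2.mem_mk_left _ _⟩
        have hle2 : chromIndex ((cycleGraph n).induce (↑Sᶜ : Set (Fin n))) ≤ 2 := by
          rw [← hG2]
          exact chromIndex_induce_le _ _
        rw [hG2] at hne
        omega
      have := cover_card hn S hcov
      omega
    exact le_antisymm (Nat.sInf_le hmem3) (le_csInf ⟨_, hmem3⟩ hlb)
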